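/- arXiv:2312.13613 — 4 statements merged into one kernel-verified Lean document; each statement's English description precedes it below -/
import Mathlib

section
/- For every prime p > 3, 12·∑_{k=0}^{p-1} k(k+1)(8k+9)·T_k·T_{k+1} ≡ −p²·(53 + 63·(p|3)) (mod p³), where (p|3) denotes the Legendre symbol. -/
open Finset

/-- The integer value of C(2k,k)/(2k-1): equals -1 at k = 0 and 2*Catalan(k-1) for k >= 1. -/
def c (k : ℕ) : ℤ := if k = 0 then -1 else 2 * (catalan (k - 1) : ℤ)

/-- W n = ∑_{k=0}^{⌊n/2⌋} C(n,2k) * C(2k,k)/(2k-1). -/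
def W (n : ℕ) : ℤ := ∑ k ∈ Finset.range (n / 2 + 1), (n.choose (2 * k) : ℤ) * c k

/-- The n-th central trinomial coefficient T n = ∑_{l=0}^{⌊n/2⌋} C(n,2l) * C(2l,l). -/
def T (n : ℕ) : ℤ := ∑ l ∈ Finset.range (n / 2 + 1), (n.choose (2 * l) : ℤ) * ((2 * l).choose l : ℤ)

instance fact_prime_3 : Fact (Nat.Prime 3) := ⟨by norm_num⟩


open Polynomial

set_option linter.unusedSectionVars false



lemma sum_even_range {M : Type*} [AddCommMonoid M] (g : ℕ → M) (h : ∀ k, ¬ Even k → g k = 0) (n : ℕ) :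
    ∑ k ∈ range (n+1), g k = ∑ l ∈ range (n/2+1), g (2*l) := by
  induction n with
  | zero => simp
  | succ n ih =>
    rw [Finset.sum_range_succ, ih]
    rcases Nat.even_or_odd (n+1) with he | ho
    · obtain ⟨m, hm⟩ := he
      have h2 : (n+1)/2 + 1 = (n/2 + 1) + 1 := by omega
      have h3 : n + 1 = 2*((n/2)+1) := by omega
      rw [h2, Finset.sum_range_succ (fun l => g (2*l)) (n/2+1)]
      rw [← h3]
    · obtain ⟨m, hm⟩ := ho
      have h2 : (n+1)/2 = n/2 := by omega
      rw [h2, h (n+1) (by simp [Nat.not_even_iff_odd.mpr ⟨m, hm⟩]), add_zero]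

lemma coeff_one_add_X_sq_pow (k : ℕ) :
    ((1 + X^2 : ℤ[X])^k).coeff k = if Even k then ((k.choose (k/2) : ℤ)) else 0 := by
  have h : ((1:ℤ[X]) + X^2)^k = ∑ j ∈ range (k+1), (X^2)^j * 1^(k-j) * (k.choose j : ℤ[X]) := by
    rw [add_comm]; exact add_pow _ _ _
  rw [h, finset_sum_coeff]
  have hterm : ∀ j ∈ range (k+1),
      ((X^2:ℤ[X])^j * 1^(k-j) * (k.choose j : ℤ[X])).coeff k
        = if k = 2*j then (k.choose j : ℤ) else 0 := by
    intro j _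
    rw [one_pow, mul_one, ← pow_mul]
    rw [show ((k.choose j : ℤ[X])) = C ((k.choose j : ℤ)) by simp]
    rw [coeff_mul_C, coeff_X_pow]
    by_cases hkj : k = 2*j
    · simp [hkj, mul_comm]
    · simp [hkj]
  rw [Finset.sum_congr rfl hterm]
  by_cases hk : Even k
  · obtain ⟨m, hm⟩ := hk
    rw [Finset.sum_eq_single (k/2)]
    · rw [if_pos (show k = 2*(k/2) by omega)]
      have hek : Even k := ⟨m, hm⟩
      simp [hek]
    · intro j _ hj
      rw [if_neg (by omega)]
    · intro hmem
      exfalso; exact hmem (Finset.mem_range.mpr (by omega))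
  · rw [if_neg hk, Finset.sum_eq_zero]
    intro j _
    rw [if_neg (by rintro rfl; exact hk ⟨j, by ring⟩)]

lemma T_eq_coeff (n : ℕ) : ((1 + X + X^2 : ℤ[X])^n).coeff n = T n := by
  have h : ((1:ℤ[X]) + X + X^2)^n = ∑ k ∈ range (n+1), (1+X^2)^k * X^(n-k) * (n.choose k : ℤ[X]) := by
    rw [show ((1:ℤ[X]) + X + X^2) = (1+X^2) + X by ring, add_pow]
  rw [h, finset_sum_coeff]
  have hterm : ∀ k ∈ range (n+1),
      (((1:ℤ[X])+X^2)^k * X^(n-k) * (n.choose k : ℤ[X])).coeff n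
        = (n.choose k : ℤ) * (if Even k then ((k.choose (k/2) : ℤ)) else 0) := by
    intro k hk
    rw [show ((n.choose k : ℤ[X])) = C ((n.choose k : ℤ)) by simp]
    rw [coeff_mul_C, mul_comm]
    congr 1
    have hkn : k ≤ n := by simpa using Finset.mem_range_succ_iff.mp hk
    rw [coeff_mul_X_pow', if_pos (Nat.sub_le _ _), show n - (n-k) = k by omega]
    exact coeff_one_add_X_sq_pow k
  rw [Finset.sum_congr rfl hterm]
  rw [sum_even_range (fun k => (n.choose k : ℤ) * (if Even k then ((k.choose (k/2) : ℤ)) else 0))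
    (by intro k hk; simp only [if_neg hk, mul_zero]) n]
  unfold T
  refine Finset.sum_congr rfl ?_
  intro l _
  rw [if_pos ⟨l, by ring⟩, show 2*l/2 = l by omega]



noncomputable def A (n k : ℕ) : ℤ := ((1 + X + X^2 : ℤ[X])^n).coeff k

lemma lemD (n j : ℕ) : ((j:ℤ)+2) * A (n+1) (j+2) = ((n:ℤ)+1) * (A n (j+1) + 2 * A n j) := by
  have hdf : derivative (1 + X + X^2 : ℤ[X]) = 1 + 2*X := by
    simp [derivative_X_pow]
  have hd : derivative ((1 + X + X^2 : ℤ[X])^(n+1))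
      = ((n+1 : ℕ) : ℤ[X]) * (1 + X + X^2)^n * (1 + 2*X) := by
    rw [derivative_pow, hdf]
    norm_num
  have h := congrArg (fun q => coeff q (j+1)) hd
  simp only [coeff_derivative] at h
  have hR : (((n+1 : ℕ) : ℤ[X]) * (1 + X + X^2)^n * (1 + 2*X)).coeff (j+1)
      = ((n:ℤ)+1) * (A n (j+1) + 2 * A n j) := by
    have e1 : ((n+1 : ℕ) : ℤ[X]) * (1 + X + X^2)^n * (1 + 2*X)
        = C ((n:ℤ)+1) * ((1 + X + X^2)^n + 2*(X * (1 + X + X^2)^n)) := by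
      have hc : ((n+1 : ℕ) : ℤ[X]) = C ((n:ℤ)+1) := by simp
      rw [hc]
      ring
    rw [e1, coeff_C_mul]
    congr 1
    rw [coeff_add]
    congr 1
    rw [show ((2:ℤ[X]) * (X * (1 + X + X^2)^n)) = C 2 * (X * (1 + X + X^2)^n) by norm_num]
    rw [coeff_C_mul, coeff_X_mul]
    rfl
  rw [hR] at h
  rw [show ((j:ℤ)+2) * A (n+1) (j+2) = A (n+1) (j+2) * (((j+1) : ℕ)+1 : ℤ) by push_cast; ring]
  exact h

lemma lemM (n j : ℕ) : A (n+1) (j+2) = A n (j+2) + A n (j+1) + A n j := by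
  have e1 : ((1 + X + X^2 : ℤ[X])^(n+1))
      = (1 + X + X^2)^n + X * (1 + X + X^2)^n + X^2 * (1 + X + X^2)^n := by
    rw [pow_succ]; ring
  have h := congrArg (fun q => coeff q (j+2)) e1
  simp only [coeff_add] at h
  unfold A
  rw [h, coeff_X_mul]
  congr 1
  exact coeff_X_pow_mul _ 2 j

lemma T_rec (n : ℕ) : ((n:ℤ)+2) * T (n+2) = (2*(n:ℤ)+3) * T (n+1) + 3*((n:ℤ)+1) * T n := by
  match n with
  | 0 => norm_num [T, Finset.sum_range_succ]
  | 1 => norm_num [T, Finset.sum_range_succ]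
  | (m+2) =>
    have hTa : ∀ k, T k = A k k := fun k => (T_eq_coeff k).symm
    have h1 := lemD (m+3) (m+2)   -- (m+4) A(m+4,m+4) = (m+4)(A(m+3,m+3)+2A(m+3,m+2))
    have h2 := lemD (m+2) (m+1)   -- (m+3) A(m+3,m+3) = (m+3)(A(m+2,m+2)+2A(m+2,m+1))
    have h3 := lemD (m+2) m       -- (m+2) A(m+3,m+2) = (m+3)(A(m+2,m+1)+2A(m+2,m))
    have h4 := lemM (m+2) m       -- A(m+3,m+2) = A(m+2,m+2)+A(m+2,m+1)+A(m+2,m)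
    have e1 : m+2+2 = m+4 := by omega
    have e2 : m+2+1 = m+3 := by omega
    have e3 : m+3+1 = m+4 := by omega
    have e4 : m+2+2 = m+4 := by omega
    rw [e1, e2, hTa (m+4), hTa (m+3), hTa (m+2)]
    norm_num at h1 h2 h3 h4
    push_cast at h1 h2 h3 h4 ⊢
    linear_combination h1 - h2 - 2*h3 + (12 + 4*(m:ℤ))*h4



lemma key_identity (n : ℕ) :
    24 * ∑ k ∈ range n, (k:ℤ)*((k:ℤ)+1)*(8*(k:ℤ)+9)*T k*T (k+1)
    = (24*(n:ℤ)^4+24*(n:ℤ)^3-30*(n:ℤ)^2-12*(n:ℤ)+18) * T n * T (n+1)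
      + (-36*(n:ℤ)^4-36*(n:ℤ)^3+27*(n:ℤ)^2+18*(n:ℤ)-9) * (T n)^2
      + (-4*(n:ℤ)^4+4*(n:ℤ)^3+11*(n:ℤ)^2-6*(n:ℤ)-9) * (T (n+1))^2 := by
  induction n with
  | zero =>
    norm_num [T, Finset.sum_range_succ]
  | succ n ih =>
    rw [Finset.sum_range_succ]
    have hrec := T_rec n
    rw [show n+1+1 = n+2 from rfl]
    push_cast
    have hne : ((n:ℤ)+2)^2 ≠ 0 := by positivity
    set a := T n
    set b := T (n+1)
    set c := T (n+2)
    have hkey : ((n:ℤ)+2)^2 *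
        (24 * ((∑ k ∈ range n, (k:ℤ)*((k:ℤ)+1)*(8*(k:ℤ)+9)*T k*T (k+1))
            + (n:ℤ)*((n:ℤ)+1)*(8*(n:ℤ)+9)*a*b)
         - ((24*((n:ℤ)+1)^4+24*((n:ℤ)+1)^3-30*((n:ℤ)+1)^2-12*((n:ℤ)+1)+18) * b * c
          + (-36*((n:ℤ)+1)^4-36*((n:ℤ)+1)^3+27*((n:ℤ)+1)^2+18*((n:ℤ)+1)-9) * b^2
          + (-4*((n:ℤ)+1)^4+4*((n:ℤ)+1)^3+11*((n:ℤ)+1)^2-6*((n:ℤ)+1)-9) * c^2)) = 0 := by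
      linear_combination ((n:ℤ)+2)^2 * ih -
        ((-4*((n:ℤ)+1)^4+4*((n:ℤ)+1)^3+11*((n:ℤ)+1)^2-6*((n:ℤ)+1)-9)
            * (((n:ℤ)+2)*c + (2*(n:ℤ)+3)*b + 3*((n:ℤ)+1)*a)
          + (24*((n:ℤ)+1)^4+24*((n:ℤ)+1)^3-30*((n:ℤ)+1)^2-12*((n:ℤ)+1)+18)*b*(((n:ℤ)+2))) * hrec
    have h0 := (mul_eq_zero.mp hkey).resolve_left hne
    linarith [h0]

variable (q : ℕ)

noncomputable abbrev Rq := AdjoinRoot (X^2 + X + 1 : (ZMod q)[X])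

lemma hmonic [Fact (1 < q)] : (X^2 + X + 1 : (ZMod q)[X]).Monic := by
  have h : (X^2 + X + 1 : (ZMod q)[X]) = X^2 + (X + 1) := by ring
  rw [h]
  refine monic_X_pow_add ?_
  refine lt_of_le_of_lt (degree_add_le _ _) ?_
  rw [degree_X, degree_one]
  norm_num

noncomputable def ww : Rq q := AdjoinRoot.root _

lemma hww : (ww q)^2 + (ww q) + 1 = 0 := by
  have h := AdjoinRoot.eval₂_root (X^2 + X + 1 : (ZMod q)[X])
  simpa [ww] using h

lemma hdeg2 [Fact (1 < q)] : (X^2 + X + 1 : (ZMod q)[X]).natDegree = 2 := by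
  have h : (X^2 + X + 1 : (ZMod q)[X]) = C 1 * X^2 + C 1 * X + C 1 := by
    simp
  rw [h]
  exact natDegree_quadratic one_ne_zero

lemma inj_q [Fact (1 < q)] : Function.Injective (algebraMap (ZMod q) (Rq q)) := by
  rw [injective_iff_map_eq_zero]
  intro z hz
  set pb := AdjoinRoot.powerBasis' (hmonic q)
  have hdim : 0 < pb.dim := by
    show 0 < (X^2 + X + 1 : (ZMod q)[X]).natDegree
    rw [hdeg2]; norm_num
  have h1 : (1 : Rq q) = pb.basis ⟨0, hdim⟩ := by
    rw [pb.basis_eq_pow]; simp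
  have h2 : z • (1 : Rq q) = 0 := by
    rw [← Algebra.algebraMap_eq_smul_one, hz]
  rw [h1] at h2
  have h3 := congrArg (fun v => pb.basis.repr v ⟨0, hdim⟩) h2
  simp only [map_smul, Module.Basis.repr_self, Finsupp.smul_apply, Finsupp.single_eq_same,
    smul_eq_mul, mul_one, map_zero, Finsupp.coe_zero, Pi.zero_apply] at h3
  exact h3




lemma sum_two_terms {M : Type*} [AddCommMonoid M] (f : ℕ → M) (n k₁ k₂ : ℕ)
    (h₁ : k₁ < n) (h₂ : k₂ < n) (hne : k₁ ≠ k₂)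
    (hf : ∀ k, k < n → k ≠ k₁ → k ≠ k₂ → f k = 0) :
    ∑ k ∈ range n, f k = f k₁ + f k₂ := by
  have hcong : ∀ k ∈ range n,
      f k = (if k = k₁ then f k₁ else 0) + (if k = k₂ then f k₂ else 0) := by
    intro k hk
    rcases eq_or_ne k k₁ with rfl | h1
    · rw [if_pos rfl, if_neg hne, add_zero]
    rcases eq_or_ne k k₂ with rfl | h2
    · rw [if_neg h1, if_pos rfl, zero_add]
    · rw [if_neg h1, if_neg h2, add_zero]
      exact hf k (Finset.mem_range.mp hk) h1 h2
  rw [Finset.sum_congr rfl hcong, Finset.sum_add_distrib,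
    Finset.sum_ite_eq' (range n) k₁ (fun _ => f k₁),
    Finset.sum_ite_eq' (range n) k₂ (fun _ => f k₂),
    if_pos (Finset.mem_range.mpr h₁), if_pos (Finset.mem_range.mpr h₂)]

lemma T_cast (S : Type*) [CommRing S] (n : ℕ) :
    ((T n : ℤ) : S) = ((1 + X + X^2 : S[X])^n).coeff n := by
  rw [← T_eq_coeff]
  have hmap : ((1 + X + X^2 : ℤ[X])^n).map (Int.castRingHom S) = (1 + X + X^2 : S[X])^n := by
    rw [Polynomial.map_pow]
    simp
  rw [← hmap, Polynomial.coeff_map]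
  rfl

section Main

variable (p : ℕ) [Fact p.Prime] (hp : 3 < p)

local notation "R" => Rq (p^2)
local notation "w" => ww (p^2)

lemma fact1q : Fact (1 < p^2) := ⟨by nlinarith [(Fact.out : p.Prime).two_le]⟩

lemma hw3 : (w)^3 = 1 := by
  linear_combination ((w) - 1) * hww (p^2)

lemma w_pow (e : ℕ) : (w)^e = (w)^(e % 3) := by
  conv_lhs => rw [← Nat.div_add_mod e 3]
  rw [pow_add, pow_mul, hw3, one_pow, one_mul]

lemma hp2R : ((p : R)) * ((p : R)) = 0 := by
  have h1 : ((p^2 : ℕ) : ZMod (p^2)) = 0 := ZMod.natCast_self _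
  have h2 : ((p^2 : ℕ) : R) = algebraMap (ZMod (p^2)) R ((p^2 : ℕ) : ZMod (p^2)) := by
    rw [map_natCast]
  rw [h1, map_zero] at h2
  push_cast at h2
  linear_combination h2

lemma mid_zero (k m : ℕ) (hk1 : 1 ≤ k) (hk2 : k < p) (hm1 : 1 ≤ m) (hm2 : m < p) :
    ((p.choose k : R)) * ((p.choose m : R)) = 0 := by
  have hprime : p.Prime := Fact.out
  obtain ⟨a, ha⟩ := hprime.dvd_choose_self (by omega) hk2
  obtain ⟨b, hb⟩ := hprime.dvd_choose_self (by omega : m ≠ 0) hm2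
  rw [ha, hb]
  push_cast
  linear_combination ((a:R) * (b:R)) * hp2R p

lemma hfac : (1 + X + X^2 : (R)[X]) = (X - C (w)) * (X - C ((w)^2)) := by
  have hC : (C ((w)^2 + (w) + 1) : (R)[X]) = 0 := by rw [hww (p^2), map_zero]
  have hC' : (C ((w)^2) + C ((w)) + 1 : (R)[X]) = 0 := by
    rw [map_add, map_add, map_one] at hC
    exact hC
  have huv : (C ((w)) * C ((w)^2) : (R)[X]) = 1 := by
    rw [← map_mul, show (w) * (w)^2 = (w)^3 by ring, hw3, map_one]
  linear_combination (X : (R)[X]) * hC' - huv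

lemma coeff_form (a : R) (i : ℕ) :
    (((X - C a)^p : (R)[X])).coeff i = (-a)^(p-i) * (p.choose i : R) := by
  rw [sub_eq_add_neg, ← map_neg C a, coeff_X_add_C_pow]

lemma gcoeff (N : ℕ) :
    (((X - C (w))^p * (X - C ((w)^2))^p : (R)[X])).coeff N
    = ∑ k ∈ range (N+1),
        ((-(w))^(p-k) * (p.choose k : R)) * ((-((w)^2))^(p-(N-k)) * (p.choose (N-k) : R)) := by
  rw [coeff_mul, Finset.Nat.sum_antidiagonal_eq_sum_range_succ_mk]
  refine Finset.sum_congr rfl ?_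
  intro k _
  rw [coeff_form, coeff_form]

lemma coeff_N_p (hp : 3 < p) :
    (((X - C (w))^p * (X - C ((w)^2))^p : (R)[X])).coeff p = -((w)^p + (w)^(2*p)) := by
  have hodd : Odd p := (Fact.out : p.Prime).odd_of_ne_two (by omega)
  rw [gcoeff]
  rw [sum_two_terms _ (p+1) 0 p (by omega) (by omega) (by omega) ?side]
  case side =>
    intro k hk h0 hpk
    have hz := mid_zero p k (p-k) (by omega) (by omega) (by omega) (by omega)
    linear_combination ((-(w))^(p-k) * (-((w)^2))^(p-(p-k))) * hz
  · simp only [Nat.choose_zero_right, Nat.choose_self, Nat.sub_self, Nat.sub_zero, pow_zero,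
      Nat.cast_one]
    rw [hodd.neg_pow, hodd.neg_pow, ← pow_mul]
    ring

lemma coeff_N_p1 (hp : 3 < p) :
    (((X - C (w))^p * (X - C ((w)^2))^p : (R)[X])).coeff (p+1)
    = (p : R) * ((w)^(p-1) + (w)^(2*p-2)) := by
  have hevp : Even (p-1) := Nat.Odd.sub_odd ((Fact.out : p.Prime).odd_of_ne_two (by omega)) odd_one
  rw [gcoeff]
  rw [sum_two_terms _ (p+2) 1 p (by omega) (by omega) (by omega) ?side]
  case side =>
    intro k hk h1 hpk
    rcases Nat.eq_zero_or_pos k with rfl | hkpos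
    · rw [show p+1-0 = p+1 by omega,
        (Nat.choose_eq_zero_of_lt (show p < p+1 by omega) : p.choose (p+1) = 0)]
      push_cast; ring
    rcases eq_or_ne k (p+1) with rfl | hkp1
    · rw [(Nat.choose_eq_zero_of_lt (show p < p+1 by omega) : p.choose (p+1) = 0)]
      push_cast; ring
    · have hz := mid_zero p k (p+1-k) (by omega) (by omega) (by omega) (by omega)
      linear_combination ((-(w))^(p-k) * (-((w)^2))^(p-(p+1-k))) * hz
  · simp only [Nat.add_sub_cancel, Nat.add_sub_cancel_left, Nat.sub_self, Nat.sub_zero,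
      Nat.choose_one_right, Nat.choose_self, Nat.choose_zero_right, pow_zero, pow_one,
      Nat.cast_one]
    rw [hevp.neg_pow, hevp.neg_pow, ← pow_mul, show 2*(p-1) = 2*p-2 by omega]
    ring

lemma coeff_N_pm1 (hp : 3 < p) :
    (((X - C (w))^p * (X - C ((w)^2))^p : (R)[X])).coeff (p-1)
    = (p : R) * ((w)^(p+2) + (w)^(2*p+1)) := by
  have hodd : Odd p := (Fact.out : p.Prime).odd_of_ne_two (by omega)
  rw [gcoeff]
  rw [show p-1+1 = p by omega]
  rw [sum_two_terms _ p 0 (p-1) (by omega) (by omega) (by omega) ?side]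
  case side =>
    intro k hk h0 hpk
    have hz := mid_zero p k (p-1-k) (by omega) (by omega) (by omega) (by omega)
    linear_combination ((-(w))^(p-k) * (-((w)^2))^(p-(p-1-k))) * hz
  · simp only [Nat.sub_zero, Nat.sub_self, Nat.choose_zero_right, Nat.cast_one,
      show p.choose (p-1) = p from by rw [Nat.choose_symm (by omega), Nat.choose_one_right]]
    rw [show p - (p-1) = 1 by omega]
    simp only [pow_one, pow_zero, Nat.cast_one]
    rw [hodd.neg_pow, hodd.neg_pow, ← pow_mul]
    have e1 : (w)^p * (w)^2 = (w)^(p+2) := by rw [← pow_add]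
    have e2 : (w)^(2*p) * (w) = (w)^(2*p+1) := by rw [← pow_succ]
    linear_combination ((p:R)) * e1 + ((p:R)) * e2

lemma trinomial_mul_coeff (f : (R)[X]) (j : ℕ) :
    ((1 + X + X^2) * f).coeff (j+2) = f.coeff (j+2) + f.coeff (j+1) + f.coeff j := by
  have e1 : (1 + X + X^2 : (R)[X]) * f = f + X*f + X^2*f := by ring
  rw [e1, coeff_add, coeff_add, coeff_X_mul]
  congr 1
  exact coeff_X_pow_mul _ 2 j

lemma hndvd3 (hp : 3 < p) : ¬ (3 ∣ p) := by
  intro h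
  have := (Nat.prime_dvd_prime_iff_eq (by norm_num) (Fact.out : p.Prime)).mp h
  omega

lemma Tp_R (hp : 3 < p) : ((T p : ℤ) : R) = 1 := by
  have h3 := hndvd3 p hp
  have hm : p % 3 = 1 ∨ p % 3 = 2 := by omega
  rw [T_cast, hfac p, mul_pow, coeff_N_p p hp, w_pow p p, w_pow p (2*p)]
  rcases hm with h | h
  · rw [h, show 2*p % 3 = 2 by omega]
    linear_combination - hww (p^2)
  · rw [h, show 2*p % 3 = 1 by omega]
    linear_combination - hww (p^2)

lemma Tp1_R (hp : 3 < p) :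
    ((T (p+1) : ℤ) : R) = if p % 3 = 1 then 1 + 4*(p:R) else 1 - 2*(p:R) := by
  have h3 := hndvd3 p hp
  have hm : p % 3 = 1 ∨ p % 3 = 2 := by omega
  rw [T_cast]
  have hsplit : ((1 + X + X^2 : (R)[X])^(p+1)).coeff (p+1)
      = (((X - C (w))^p * (X - C ((w)^2))^p : (R)[X])).coeff (p+1)
      + (((X - C (w))^p * (X - C ((w)^2))^p : (R)[X])).coeff p
      + (((X - C (w))^p * (X - C ((w)^2))^p : (R)[X])).coeff (p-1) := by
    have e1 : ((1 + X + X^2 : (R)[X])^(p+1))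
        = (1 + X + X^2) * ((X - C (w))^p * (X - C ((w)^2))^p) := by
      rw [pow_succ' (1 + X + X^2 : (R)[X]) p, hfac p, mul_pow]
    rw [e1]
    have := trinomial_mul_coeff p ((X - C (w))^p * (X - C ((w)^2))^p) (p-1)
    rw [show p-1+2 = p+1 by omega, show p-1+1 = p by omega] at this
    exact this
  rw [hsplit, coeff_N_p1 p hp, coeff_N_p p hp, coeff_N_pm1 p hp,
    w_pow p (p-1), w_pow p (2*p-2), w_pow p p, w_pow p (2*p),
    w_pow p (p+2), w_pow p (2*p+1)]
  rcases hm with h | h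
  · rw [h, if_pos rfl, show (p-1) % 3 = 0 by omega, show (2*p-2) % 3 = 0 by omega,
      show 2*p % 3 = 2 by omega, show (p+2) % 3 = 0 by omega, show (2*p+1) % 3 = 0 by omega]
    linear_combination - hww (p^2)
  · rw [h, if_neg (by omega), show (p-1) % 3 = 1 by omega, show (2*p-2) % 3 = 2 by omega,
      show 2*p % 3 = 1 by omega, show (p+2) % 3 = 1 by omega, show (2*p+1) % 3 = 2 by omega]
    linear_combination (2*(p:R) - 1) * hww (p^2)

lemma pull_back (hp : 3 < p) (a : ℤ) (b : ℤ) (hab : ((a : ℤ) : R) = (b : R)) :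
    ((p:ℤ))^2 ∣ a - b := by
  haveI : Fact (1 < p^2) := fact1q p
  have h2 : algebraMap (ZMod (p^2)) R ((a : ZMod (p^2))) = algebraMap (ZMod (p^2)) R ((b : ZMod (p^2))) := by
    rw [map_intCast, map_intCast]
    exact hab
  have h3 := inj_q (p^2) h2
  have h4 : ((a - b : ℤ) : ZMod (p^2)) = 0 := by
    push_cast
    rw [h3]
    ring
  have h5 := (ZMod.intCast_zmod_eq_zero_iff_dvd _ _).mp h4
  have h6 : ((p^2 : ℕ) : ℤ) = ((p:ℤ))^2 := by push_cast; ring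
  rwa [h6] at h5

lemma Tp_dvd (hp : 3 < p) : ((p:ℤ))^2 ∣ T p - 1 :=
  pull_back p hp (T p) 1 (by rw [Tp_R p hp]; norm_num)

lemma Tp1_dvd (hp : 3 < p) :
    ((p:ℤ))^2 ∣ T (p+1) - (if p % 3 = 1 then 1 + 4*(p:ℤ) else 1 - 2*(p:ℤ)) := by
  refine pull_back p hp (T (p+1)) _ ?_
  rw [Tp1_R p hp]
  rcases eq_or_ne (p % 3) 1 with h | h
  · rw [if_pos h, if_pos h]; push_cast; ring
  · rw [if_neg h, if_neg h]; push_cast; ring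

end Main

set_option maxHeartbeats 1000000 in
theorem stmt_2 (p : ℕ) [Fact p.Prime] (hp : 3 < p) :
    12 * (∑ k ∈ Finset.range p, (k : ℤ) * ((k : ℤ) + 1) * (8 * (k : ℤ) + 9) * T k * T (k + 1)) ≡
      -(p : ℤ) ^ 2 * (53 + 63 * legendreSym 3 p) [ZMOD ((p : ℤ) ^ 3)] := by
  have hprime : p.Prime := Fact.out
  have h3 := hndvd3 p hp
  have hodd : Odd p := hprime.odd_of_ne_two (by omega)
  have hpz3 : (((p:ℤ)) : ZMod 3) ≠ 0 := by
    rw [Ne, ZMod.intCast_zmod_eq_zero_iff_dvd]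
    intro hdvd
    exact h3 (by exact_mod_cast hdvd)
  have hpow := legendreSym.eq_pow 3 ((p:ℤ))
  have h1or := legendreSym.eq_one_or_neg_one (p := 3) hpz3
  have hcast : (((p:ℤ)) : ZMod 3) = ((p % 3 : ℕ) : ZMod 3) := by
    rw [Int.cast_natCast, ZMod.natCast_mod]
  have hleg : (p % 3 = 1 ∧ legendreSym 3 p = 1) ∨ (p % 3 = 2 ∧ legendreSym 3 p = -1) := by
    have hmod : p % 3 = 1 ∨ p % 3 = 2 := by omega
    rcases hmod with h | h
    · left
      refine ⟨h, ?_⟩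
      rcases h1or with h1 | h1
      · exact h1
      · exfalso
        rw [h1, hcast, h] at hpow
        norm_num at hpow
        exact absurd hpow (by decide)
    · right
      refine ⟨h, ?_⟩
      rcases h1or with h1 | h1
      · exfalso
        rw [h1, hcast, h] at hpow
        norm_num at hpow
        exact absurd hpow (by decide)
      · exact h1
  obtain ⟨x, hx⟩ := Tp_dvd p hp
  have hx' : T p = 1 + (p:ℤ)^2 * x := by linarith
  have hid := key_identity p
  rw [hx'] at hid
  have hy0 := Tp1_dvd p hp
  have hco : IsCoprime ((p:ℤ)^3) (2:ℤ) := by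
    refine IsCoprime.pow_left ?_
    refine Int.isCoprime_iff_gcd_eq_one.mpr ?_
    rw [show (2:ℤ) = ((2:ℕ):ℤ) by norm_num, Int.gcd_natCast_natCast]
    exact (Nat.coprime_primes hprime Nat.prime_two).mpr (by omega)
  rcases hleg with ⟨hm, he⟩ | ⟨hm, he⟩
  · rw [if_pos hm] at hy0
    obtain ⟨y, hy⟩ := hy0
    have hy' : T (p+1) = 1 + 4*(p:ℤ) + (p:ℤ)^2 * y := by linarith
    rw [hy'] at hid
    rw [he, Int.modEq_iff_dvd]
    refine hco.dvd_of_dvd_mul_left ?_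
    refine ⟨(136)*(1:ℤ) + (96)*y + (-96)*x + (-288)*(p:ℤ) + (56)*(p:ℤ)*y + (9)*(p:ℤ)*y^2 + (24)*(p:ℤ)*x + (-18)*(p:ℤ)*x*y + (9)*(p:ℤ)*x^2 + (-128)*(p:ℤ)^2 + (-120)*(p:ℤ)^2*y + (6)*(p:ℤ)^2*y^2 + (168)*(p:ℤ)^2*x + (12)*(p:ℤ)^2*x*y + (-18)*(p:ℤ)^2*x^2 + (64)*(p:ℤ)^3 + (-48)*(p:ℤ)^3*y + (-11)*(p:ℤ)^3*y^2 + (-48)*(p:ℤ)^3*x + (30)*(p:ℤ)^3*x*y + (-27)*(p:ℤ)^3*x^2 + (32)*(p:ℤ)^4*y + (-4)*(p:ℤ)^4*y^2 + (-96)*(p:ℤ)^4*x + (-24)*(p:ℤ)^4*x*y + (36)*(p:ℤ)^4*x^2 + (4)*(p:ℤ)^5*y^2 + (-24)*(p:ℤ)^5*x*y + (36)*(p:ℤ)^5*x^2, ?_⟩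
    linear_combination -hid
  · rw [if_neg (by omega)] at hy0
    obtain ⟨y, hy⟩ := hy0
    have hy' : T (p+1) = 1 - 2*(p:ℤ) + (p:ℤ)^2 * y := by linarith
    rw [hy'] at hid
    rw [he, Int.modEq_iff_dvd]
    refine hco.dvd_of_dvd_mul_left ?_
    refine ⟨(16)*(1:ℤ) + (-12)*y + (12)*x + (36)*(p:ℤ) + (-16)*(p:ℤ)*y + (9)*(p:ℤ)*y^2 + (-48)*(p:ℤ)*x + (-18)*(p:ℤ)*x*y + (9)*(p:ℤ)*x^2 + (16)*(p:ℤ)^2 + (12)*(p:ℤ)^2*y + (6)*(p:ℤ)^2*y^2 + (-12)*(p:ℤ)^2*x + (12)*(p:ℤ)^2*x*y + (-18)*(p:ℤ)^2*x^2 + (16)*(p:ℤ)^3 + (-11)*(p:ℤ)^3*y^2 + (96)*(p:ℤ)^3*x + (30)*(p:ℤ)^3*x*y + (-27)*(p:ℤ)^3*x^2 + (-16)*(p:ℤ)^4*y + (-4)*(p:ℤ)^4*y^2 + (48)*(p:ℤ)^4*x + (-24)*(p:ℤ)^4*x*y + (36)*(p:ℤ)^4*x^2 + (4)*(p:ℤ)^5*y^2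 + (-24)*(p:ℤ)^5*x*y + (36)*(p:ℤ)^5*x^2, ?_⟩
    linear_combination -hid
end

section
/- For every positive integer n, the integer n²(n²−1)/6 divides ∑_{k=0}^{n-1} k(k+1)(8k+9)·T_k·T_{k+1}. -/
open Finset

/-- Motzkin-type sum: Mo n = ∑ C(n,2j) * catalan j (this is the Motzkin number). -/
def Mo (n : ℕ) : ℤ := ∑ j ∈ Finset.range (n / 2 + 1), (n.choose (2 * j) : ℤ) * (catalan j : ℤ)

lemma T_ext (n N : ℕ) (h : n / 2 + 1 ≤ N) :
    T n = ∑ l ∈ Finset.range N, (n.choose (2 * l) : ℤ) * ((2 * l).choose l : ℤ) := by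
  rw [T]
  apply Finset.sum_subset (Finset.range_subset_range.2 h)
  intro x _ hx
  rw [Finset.mem_range, not_lt] at hx
  have : n < 2 * x := by omega
  simp [Nat.choose_eq_zero_of_lt this]

lemma Mo_ext (n N : ℕ) (h : n / 2 + 1 ≤ N) :
    Mo n = ∑ j ∈ Finset.range N, (n.choose (2 * j) : ℤ) * (catalan j : ℤ) := by
  rw [Mo]
  apply Finset.sum_subset (Finset.range_subset_range.2 h)
  intro x _ hx
  rw [Finset.mem_range, not_lt] at hx
  have : n < 2 * x := by omega
  simp [Nat.choose_eq_zero_of_lt this]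

lemma cb (l : ℕ) : (2 * l + 2).choose (l + 1) = 2 * (2 * l + 1) * catalan l := by
  have h1 := Nat.succ_mul_centralBinom_succ l
  have h2 := succ_mul_catalan_eq_centralBinom l
  have h3 : Nat.centralBinom (l + 1) = (2 * l + 2).choose (l + 1) := by
    rw [Nat.centralBinom_eq_two_mul_choose, show 2 * (l + 1) = 2 * l + 2 from by ring]
  apply Nat.eq_of_mul_eq_mul_left (show 0 < l + 1 by omega)
  calc (l + 1) * ((2 * l + 2).choose (l + 1)) = (l + 1) * Nat.centralBinom (l + 1) := by
        rw [h3]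
    _ = 2 * (2 * l + 1) * Nat.centralBinom l := h1
    _ = 2 * (2 * l + 1) * ((l + 1) * catalan l) := by rw [h2]
    _ = (l + 1) * (2 * (2 * l + 1) * catalan l) := by ring

lemma tR1 (m l : ℕ) :
    (m + 1).choose (2 * l + 1) * ((2 * l + 2).choose (l + 1))
      = 2 * (m + 1) * (m.choose (2 * l)) * catalan l := by
  have h1 := Nat.add_one_mul_choose_eq m (2 * l)
  apply Nat.eq_of_mul_eq_mul_left (show 0 < 2 * l + 1 by omega)
  calc (2 * l + 1) * ((m + 1).choose (2 * l + 1) * ((2 * l + 2).choose (l + 1)))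
      = ((m + 1).choose (2 * l + 1) * (2 * l + 1)) * ((2 * l + 2).choose (l + 1)) := by ring
    _ = ((m + 1) * m.choose (2 * l)) * (2 * (2 * l + 1) * catalan l) := by rw [← h1, cb]
    _ = (2 * l + 1) * (2 * (m + 1) * m.choose (2 * l) * catalan l) := by ring

lemma I1 (m : ℕ) : T (m + 2) = T (m + 1) + 2 * ((m : ℤ) + 1) * Mo m := by
  have e2 := T_ext (m + 2) (m + 3) (by omega)
  have e1 := T_ext (m + 1) (m + 3) (by omega)
  have e0 := Mo_ext m (m + 2) (by omega)
  rw [e2, e1, e0]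
  rw [Finset.sum_range_succ' (fun l => ((m + 2).choose (2 * l) : ℤ) * ((2 * l).choose l : ℤ)) (m + 2)]
  rw [Finset.sum_range_succ' (fun l => ((m + 1).choose (2 * l) : ℤ) * ((2 * l).choose l : ℤ)) (m + 2)]
  rw [Finset.mul_sum]
  have hterm : ∀ l ∈ Finset.range (m + 2),
      ((m + 2).choose (2 * (l + 1)) : ℤ) * ((2 * (l + 1)).choose (l + 1) : ℤ)
        = ((m + 1).choose (2 * (l + 1)) : ℤ) * ((2 * (l + 1)).choose (l + 1) : ℤ)
          + 2 * ((m : ℤ) + 1) * ((m.choose (2 * l) : ℤ) * (catalan l : ℤ)) := by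
    intro l _
    have hidx : 2 * (l + 1) = 2 * l + 2 := by ring
    rw [hidx]
    have hp : (m + 2).choose (2 * l + 2) = (m + 1).choose (2 * l + 1) + (m + 1).choose (2 * l + 2) :=
      Nat.choose_succ_succ (m + 1) (2 * l + 1)
    have ht : ((m + 1).choose (2 * l + 1) : ℤ) * ((2 * l + 2).choose (l + 1) : ℤ)
        = 2 * ((m : ℤ) + 1) * (m.choose (2 * l) : ℤ) * (catalan l : ℤ) := by
      exact_mod_cast congrArg (Nat.cast (R := ℤ)) (tR1 m l)
    rw [hp]
    push_cast
    linear_combination ht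
  rw [Finset.sum_congr rfl hterm, Finset.sum_add_distrib]
  simp [Nat.choose_zero_right]
  ring

lemma I2 (m : ℕ) : ((m : ℤ) + 3) * Mo (m + 1) = ((m : ℤ) + 1) * Mo m + 2 * T (m + 1) := by
  rw [Mo_ext (m + 1) (m + 2) (by omega), Mo_ext m (m + 2) (by omega),
    T_ext (m + 1) (m + 2) (by omega)]
  rw [Finset.mul_sum, Finset.mul_sum, Finset.mul_sum, ← Finset.sum_add_distrib]
  apply Finset.sum_congr rfl
  intro j _
  have hcat : ((2 * j).choose j : ℤ) = ((j : ℤ) + 1) * (catalan j : ℤ) := by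
    have h := succ_mul_catalan_eq_centralBinom j
    rw [Nat.centralBinom_eq_two_mul_choose] at h
    exact_mod_cast h.symm
  by_cases h : 2 * j ≤ m + 1
  · have key : (m + 1) * (m.choose (2 * j)) = (m + 1).choose (2 * j) * (m + 1 - 2 * j) := by
      have h1 := Nat.add_one_mul_choose_eq m (2 * j)
      have h2 := Nat.choose_succ_right_eq (m + 1) (2 * j)
      rw [h1, h2]
    have keyz : ((m : ℤ) + 1) * (m.choose (2 * j) : ℤ)
        = ((m + 1).choose (2 * j) : ℤ) * ((m : ℤ) + 1 - 2 * (j : ℤ)) := by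
      have := congrArg (Nat.cast (R := ℤ)) key
      push_cast [h] at this
      linear_combination this
    rw [hcat]
    linear_combination (-(catalan j : ℤ)) * keyz
  · have hx : (m + 1).choose (2 * j) = 0 := Nat.choose_eq_zero_of_lt (by omega)
    have hy : m.choose (2 * j) = 0 := Nat.choose_eq_zero_of_lt (by omega)
    simp [hx, hy]

lemma T0 : T 0 = 1 := by simp [T]

lemma T1 : T 1 = 1 := by simp [T]

lemma T2 : T 2 = 3 := by
  rw [T]
  norm_num [Finset.sum_range_succ]

lemma Mo0 : Mo 0 = 1 := by simp [Mo]

lemma rec3 (n : ℕ) : ((n : ℤ) + 2) * T (n + 2) = (2 * (n : ℤ) + 3) * T (n + 1) + 3 * ((n : ℤ) + 1) * T n := by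
  cases n with
  | zero => norm_num [T0, T1, T2]
  | succ m =>
    have e1 := I1 (m + 1)
    have e2 := I2 m
    have e3 := I1 m
    push_cast at e1 e2 e3 ⊢
    linear_combination ((m : ℤ) + 3) * e1 + 2 * ((m : ℤ) + 2) * e2 - ((m : ℤ) + 2) * e3

lemma closed (n : ℕ) :
    24 * (∑ k ∈ Finset.range n, (k : ℤ) * ((k : ℤ) + 1) * (8 * (k : ℤ) + 9) * T k * T (k + 1))
      = (-36 * (n : ℤ) ^ 4 - 36 * (n : ℤ) ^ 3 + 27 * (n : ℤ) ^ 2 + 18 * (n : ℤ) - 9) * (T n) ^ 2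
        + (24 * (n : ℤ) ^ 4 + 24 * (n : ℤ) ^ 3 - 30 * (n : ℤ) ^ 2 - 12 * (n : ℤ) + 18) * (T n) * (T (n + 1))
        + (-4 * (n : ℤ) ^ 4 + 4 * (n : ℤ) ^ 3 + 11 * (n : ℤ) ^ 2 - 6 * (n : ℤ) - 9) * (T (n + 1)) ^ 2 := by
  induction n with
  | zero => norm_num [T0, T1]
  | succ n ih =>
    rw [Finset.sum_range_succ]
    have r := rec3 n
    refine mul_left_cancel₀ (a := ((n : ℤ) + 2) ^ 2) (by positivity) ?_
    push_cast
    linear_combination ((n : ℤ) + 2) ^ 2 * ih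
      - ((-4 * ((n : ℤ) + 1) ^ 4 + 4 * ((n : ℤ) + 1) ^ 3 + 11 * ((n : ℤ) + 1) ^ 2 - 6 * ((n : ℤ) + 1) - 9)
            * (((n : ℤ) + 2) * T (n + 2) + (2 * (n : ℤ) + 3) * T (n + 1) + 3 * ((n : ℤ) + 1) * T n)
          + (24 * ((n : ℤ) + 1) ^ 4 + 24 * ((n : ℤ) + 1) ^ 3 - 30 * ((n : ℤ) + 1) ^ 2 - 12 * ((n : ℤ) + 1) + 18)
            * ((n : ℤ) + 2) * T (n + 1)) * r

lemma L3 (n : ℕ) :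
    6 * (∑ k ∈ Finset.range (n + 1), (k : ℤ) * ((k : ℤ) + 1) * (8 * (k : ℤ) + 9) * T k * T (k + 1))
      = ((n : ℤ) + 1) ^ 2 * ((n : ℤ) + 2)
        * (-2 * (2 * (n : ℤ) + 1) * (T (n + 1)) ^ 2
            + 4 * (2 * (n : ℤ) ^ 2 + 6 * (n : ℤ) + 1) * (T (n + 1)) * (Mo n)
            - ((n : ℤ) + 2) * (2 * (n : ℤ) - 1) ^ 2 * (Mo n) ^ 2) := by
  have hc := closed (n + 1)
  have h1 := I1 n
  refine mul_left_cancel₀ (a := (4 : ℤ)) (by norm_num) ?_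
  push_cast at hc ⊢
  linear_combination hc
    + ((24 * ((n : ℤ) + 1) ^ 4 + 24 * ((n : ℤ) + 1) ^ 3 - 30 * ((n : ℤ) + 1) ^ 2 - 12 * ((n : ℤ) + 1) + 18)
          * T (n + 1)
        + (-4 * ((n : ℤ) + 1) ^ 4 + 4 * ((n : ℤ) + 1) ^ 3 + 11 * ((n : ℤ) + 1) ^ 2 - 6 * ((n : ℤ) + 1) - 9)
          * (T (n + 2) + T (n + 1) + 2 * ((n : ℤ) + 1) * Mo n)) * h1

lemma L4 (m : ℕ) : (m : ℤ) ∣ 2 * (T (m + 1) - Mo m) := by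
  cases m with
  | zero => norm_num [T1, Mo0]
  | succ k =>
    have h1 : ((k : ℤ) + 1) ∣ (T (k + 2) - T (k + 1)) := ⟨2 * Mo k, by linear_combination I1 k⟩
    have h2 : ((k : ℤ) + 1) ∣ 2 * (T (k + 1) - Mo (k + 1)) := by
      rw [T, Mo, ← Finset.sum_sub_distrib, Finset.mul_sum]
      apply Finset.dvd_sum
      intro l _
      rw [← mul_sub]
      rcases Nat.eq_zero_or_pos l with hl0 | hlp
      · subst hl0
        simp
      · obtain ⟨j, rfl⟩ : ∃ j, l = j + 1 := ⟨l - 1, by omega⟩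
        have hn1 := Nat.add_one_mul_choose_eq k (2 * j + 1)
        have hn1z : ((k : ℤ) + 1) * (k.choose (2 * j + 1) : ℤ)
            = ((k + 1).choose (2 * j + 2) : ℤ) * (2 * (j : ℤ) + 2) := by exact_mod_cast hn1
        have hcat : ((2 * j + 2).choose (j + 1) : ℤ) = ((j : ℤ) + 2) * (catalan (j + 1) : ℤ) := by
          have h := succ_mul_catalan_eq_centralBinom (j + 1)
          rw [Nat.centralBinom_eq_two_mul_choose] at h
          have h2 : 2 * (j + 1) = 2 * j + 2 := by ring
          rw [h2] at h
          exact_mod_cast h.symm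
        have hidx : 2 * (j + 1) = 2 * j + 2 := by ring
        rw [hidx]
        refine ⟨(k.choose (2 * j + 1) : ℤ) * (catalan (j + 1) : ℤ), ?_⟩
        linear_combination 2 * ((k + 1).choose (2 * j + 2) : ℤ) * hcat - (catalan (j + 1) : ℤ) * hn1z
    have h3 : 2 * (T (k + 2) - Mo (k + 1))
        = 2 * (T (k + 2) - T (k + 1)) + 2 * (T (k + 1) - Mo (k + 1)) := by ring
    have h4 : ((k : ℤ) + 1) ∣ 2 * (T (k + 2) - Mo (k + 1)) := by
      rw [h3]; exact dvd_add (h1.mul_left 2) h2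
    have h5 : ((k + 1 : ℕ) : ℤ) = (k : ℤ) + 1 := by push_cast; ring
    rw [h5]
    exact h4

theorem stmt_3 (n : ℕ) (hn : 0 < n) :
    ((n : ℤ) ^ 2 * ((n : ℤ) ^ 2 - 1) / 6) ∣
      ∑ k ∈ Finset.range n, (k : ℤ) * ((k : ℤ) + 1) * (8 * (k : ℤ) + 9) * T k * T (k + 1) := by
  obtain ⟨m, rfl⟩ : ∃ m, n = m + 1 := ⟨n - 1, by omega⟩
  have h6 : (6 : ℤ) ∣ ((m : ℤ) + 1) ^ 2 * (((m : ℤ) + 1) ^ 2 - 1) := by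
    suffices h : ((((m : ℤ) + 1) ^ 2 * (((m : ℤ) + 1) ^ 2 - 1) : ℤ) : ZMod 6) = 0 by
      exact (ZMod.intCast_zmod_eq_zero_iff_dvd _ 6).mp h
    push_cast
    generalize ((m : ZMod 6)) = x
    revert x
    decide
  obtain ⟨e, he⟩ := h6
  obtain ⟨g, hg⟩ := L4 m
  have hL3 := L3 m
  set t := T (m + 1) with ht
  set mo := Mo m with hmo
  set K : ℤ := -g * (t - mo)
    + (-4 * t ^ 2 + 8 * ((m : ℤ) + 3) * t * mo + (-4 * (m : ℤ) ^ 2 - 4 * (m : ℤ) + 7) * mo ^ 2) with hK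
  have hFK : (-2 * (2 * (m : ℤ) + 1) * t ^ 2
      + 4 * (2 * (m : ℤ) ^ 2 + 6 * (m : ℤ) + 1) * t * mo
      - ((m : ℤ) + 2) * (2 * (m : ℤ) - 1) ^ 2 * mo ^ 2) = (m : ℤ) * K := by
    rw [hK]
    linear_combination (mo - t) * hg
  have key : 6 * (∑ k ∈ Finset.range (m + 1), (k : ℤ) * ((k : ℤ) + 1) * (8 * (k : ℤ) + 9) * T k * T (k + 1))
      = 6 * (e * K) := by
    rw [hL3, hFK]
    linear_combination K * he
  have hS : (∑ k ∈ Finset.range (m + 1), (k : ℤ) * ((k : ℤ) + 1) * (8 * (k : ℤ) + 9) * T k * T (k + 1))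
      = e * K := mul_left_cancel₀ (by norm_num : (6 : ℤ) ≠ 0) key
  have hdiv : (((m + 1 : ℕ) : ℤ)) ^ 2 * ((((m + 1 : ℕ) : ℤ)) ^ 2 - 1) / 6 = e := by
    push_cast
    rw [he]
    exact Int.mul_ediv_cancel_left _ (by norm_num)
  rw [hdiv]
  exact ⟨K, hS⟩
end

section
/- For every prime p > 3, W_{p-1} ≡ 3a − 4b (mod p), where a = (−3|p) and b = (−1|p) are Legendre symbols. -/
open Finset

/-- centralBinom (j+1) = 2 * (2j+1) * catalan j -/
lemma centralBinom_succ_eq (j : ℕ) :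
    Nat.centralBinom (j + 1) = 2 * (2 * j + 1) * catalan j := by
  apply Nat.eq_of_mul_eq_mul_left (Nat.succ_pos j)
  rw [Nat.succ_mul_centralBinom_succ, ← succ_mul_catalan_eq_centralBinom]
  simp only [Nat.succ_eq_add_one]
  ring

/-- Nonzero casts of small naturals mod p. -/
lemma cast_ne_zero_of_lt (p a : ℕ) [Fact p.Prime] (h0 : 0 < a) (h1 : a < p) :
    (a : ZMod p) ≠ 0 := by
  rw [Ne, ZMod.natCast_eq_zero_iff]
  intro h
  exact absurd (Nat.le_of_dvd h0 h) (by omega)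

/-- Key congruence: centralBinom k ≡ (1-2k) * (-4)^k * C((p+1)/2, k) mod p. -/
lemma keyD (p : ℕ) [Fact p.Prime] (m : ℕ) (hm : 2 * m + 1 = p) :
    ∀ k, k ≤ m → ((Nat.centralBinom k : ZMod p)) =
      (1 - 2 * (k : ZMod p)) * (-4) ^ k * ((m + 1).choose k : ZMod p) := by
  intro k hk
  induction k with
  | zero => simp [Nat.centralBinom]
  | succ j ih =>
    have IH := ih (le_trans (Nat.le_succ j) hk)
    have hjp : (j : ℕ) + 1 < p := by omega
    have hne : ((j : ZMod p) + 1) ≠ 0 := by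
      have := cast_ne_zero_of_lt p (j + 1) (Nat.succ_pos j) hjp
      push_cast at this
      exact this
    have h2t : (2 : ZMod p) * ((m : ZMod p) + 1) = 1 := by
      have h1 : ((2 * (m + 1) : ℕ) : ZMod p) = ((p + 1 : ℕ) : ZMod p) := by
        congr 1; omega
      push_cast at h1
      have hp0 : ((p : ℕ) : ZMod p) = 0 := ZMod.natCast_self p
      linear_combination h1 + hp0
    -- cast of succ_mul_centralBinom_succ
    have hA : ((j : ZMod p) + 1) * (Nat.centralBinom (j + 1) : ZMod p)
        = 2 * (2 * (j : ZMod p) + 1) * (Nat.centralBinom j : ZMod p) := by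
      have := Nat.succ_mul_centralBinom_succ j
      have h2 : (((j + 1) * Nat.centralBinom (j + 1) : ℕ) : ZMod p)
          = ((2 * (2 * j + 1) * Nat.centralBinom j : ℕ) : ZMod p) := by rw [this]
      push_cast at h2
      linear_combination h2
    -- cast of choose_succ_right_eq
    have hB : (((m + 1).choose (j + 1) : ZMod p)) * ((j : ZMod p) + 1)
        = (((m : ZMod p) + 1) - (j : ZMod p)) * ((m + 1).choose j : ZMod p) := by
      have h0 := Nat.choose_succ_right_eq (m + 1) j
      have h2 : (((m + 1).choose (j + 1) * (j + 1) : ℕ) : ZMod p)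
          = (((m + 1).choose j * (m + 1 - j) : ℕ) : ZMod p) := by rw [h0]
      have hsub : ((m + 1 - j : ℕ) : ZMod p) = ((m : ZMod p) + 1) - (j : ZMod p) := by
        have : ((m + 1 - j : ℕ) : ZMod p) = ((m + 1 : ℕ) : ZMod p) - ((j : ℕ) : ZMod p) :=
          Nat.cast_sub (by omega)
        push_cast at this ⊢
        exact this
      push_cast at h2
      rw [hsub] at h2
      linear_combination h2
    -- use hB with 2t = 1 : 2*(C1*(J+1)) = (1-2J)*C0
    have hB2 : (2 : ZMod p) * ((((m + 1).choose (j + 1) : ZMod p)) * ((j : ZMod p) + 1))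
        = (1 - 2 * (j : ZMod p)) * ((m + 1).choose j : ZMod p) := by
      rw [hB]
      linear_combination ((m + 1).choose j : ZMod p) * h2t
    have h2ne : (2 : ZMod p) ≠ 0 := by
      have hp1 : 1 < p := (Fact.out : p.Prime).one_lt
      exact cast_ne_zero_of_lt p 2 (by norm_num) (by omega)
    apply mul_left_cancel₀ (mul_ne_zero h2ne hne)
    push_cast
    linear_combination 2 * hA + 4 * (2 * (j : ZMod p) + 1) * IH
      - (1 - 2 * ((j : ZMod p) + 1)) * (-4) ^ (j + 1) * hB2

/-- c k ≡ -((-4)^k * C(m+1,k)) mod p. -/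
lemma keyA (p : ℕ) [Fact p.Prime] (m : ℕ) (hm : 2 * m + 1 = p) :
    ∀ k, k ≤ m → ((c k : ℤ) : ZMod p) = -((-4) ^ k * ((m + 1).choose k : ZMod p)) := by
  intro k hk
  match k with
  | 0 => simp [c]
  | (j + 1) =>
    have hD := keyD p m hm (j + 1) hk
    have hc : ((c (j + 1) : ℤ) : ZMod p) = 2 * (catalan j : ZMod p) := by
      simp only [c, Nat.add_sub_cancel, if_neg (Nat.succ_ne_zero j)]
      push_cast
      ring
    have hcb : (Nat.centralBinom (j + 1) : ZMod p)
        = (2 * (j : ZMod p) + 1) * ((c (j + 1) : ℤ) : ZMod p) := by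
      have h := centralBinom_succ_eq j
      have h2 : ((Nat.centralBinom (j + 1) : ℕ) : ZMod p)
          = ((2 * (2 * j + 1) * catalan j : ℕ) : ZMod p) := by rw [h]
      push_cast at h2
      rw [hc]
      linear_combination h2
    have hne : (2 * (j : ZMod p) + 1) ≠ 0 := by
      have h := cast_ne_zero_of_lt p (2 * j + 1) (by omega) (by omega)
      push_cast at h
      exact h
    apply mul_left_cancel₀ hne
    rw [← hcb, hD]
    push_cast
    ring

/-- C(p-1, j) ≡ (-1)^j mod p. -/
lemma keyE (p : ℕ) [Fact p.Prime] (q : ℕ) (hq : q + 1 = p) :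
    ∀ j, j ≤ q → ((q.choose j : ZMod p)) = (-1) ^ j := by
  intro j hj
  induction j with
  | zero => simp
  | succ i ih =>
    have hi := ih (by omega)
    have hdvd : p ∣ p.choose (i + 1) :=
      Nat.Prime.dvd_choose_self Fact.out (by omega) (by omega)
    have h0 : ((p.choose (i + 1) : ℕ) : ZMod p) = 0 :=
      (ZMod.natCast_eq_zero_iff _ _).mpr hdvd
    have hch : p.choose (i + 1) = q.choose i + q.choose (i + 1) := by
      rw [← hq]; exact Nat.choose_succ_succ q i
    rw [hch] at h0
    push_cast at h0
    rw [hi] at h0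
    have hn : ((-1 : ZMod p)) ^ (i + 1) = -(-1 : ZMod p) ^ i := by ring
    rw [hn]
    linear_combination h0

theorem stmt_7 (p : ℕ) [Fact p.Prime] (hp : 3 < p) :
    W (p - 1) ≡ 3 * legendreSym p (-3) - 4 * legendreSym p (-1) [ZMOD (p : ℤ)] := by
  have hprime : p.Prime := Fact.out
  rcases hprime.eq_two_or_odd with h2 | hodd
  · omega
  set m := p / 2 with hmdef
  have hm : 2 * m + 1 = p := by omega
  rw [← ZMod.intCast_eq_intCast_iff]
  have hW : W (p - 1) = ∑ k ∈ Finset.range (m + 1), ((p - 1).choose (2 * k) : ℤ) * c k := by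
    unfold W
    rw [show (p - 1) / 2 = m from by omega]
  rw [hW]
  push_cast
  have hterm : ∀ k ∈ Finset.range (m + 1),
      (((p - 1).choose (2 * k) : ℕ) : ZMod p) * ((c k : ℤ) : ZMod p)
        = -((-4 : ZMod p) ^ k * ((m + 1).choose k : ZMod p)) := by
    intro k hk
    rw [Finset.mem_range] at hk
    rw [keyE p (p - 1) (by omega) (2 * k) (by omega), keyA p m hm k (by omega)]
    rw [pow_mul]
    norm_num
  rw [Finset.sum_congr rfl hterm]
  have hsum : ∑ k ∈ Finset.range (m + 1), (-4 : ZMod p) ^ k * ((m + 1).choose k : ZMod p)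
      = (-3 : ZMod p) ^ (m + 1) - (-4 : ZMod p) ^ (m + 1) := by
    have hbin := add_pow (-4 : ZMod p) 1 (m + 1)
    rw [Finset.sum_range_succ] at hbin
    simp only [one_pow, mul_one, Nat.choose_self, Nat.cast_one] at hbin
    rw [show (-4 : ZMod p) + 1 = -3 from by ring] at hbin
    linear_combination -hbin
  rw [Finset.sum_neg_distrib, hsum]
  have hL3 : ((legendreSym p (-3) : ℤ) : ZMod p) = (-3 : ZMod p) ^ m := by
    rw [legendreSym.eq_pow, ← hmdef]
    norm_num
  have hL1 : ((legendreSym p (-1) : ℤ) : ZMod p) = (-1 : ZMod p) ^ m := by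
    rw [legendreSym.eq_pow, ← hmdef]
    norm_num
  rw [hL3, hL1]
  have h4 : (-4 : ZMod p) ^ m = (-1 : ZMod p) ^ m := by
    have h2ne : (2 : ZMod p) ≠ 0 := by
      have h := cast_ne_zero_of_lt p 2 (by norm_num) (by omega)
      push_cast at h
      exact h
    have hf : (2 : ZMod p) ^ (p - 1) = 1 := ZMod.pow_card_sub_one_eq_one h2ne
    calc (-4 : ZMod p) ^ m = (-1 : ZMod p) ^ m * ((2 : ZMod p) ^ 2) ^ m := by
          rw [← mul_pow]; norm_num
      _ = (-1 : ZMod p) ^ m * (2 : ZMod p) ^ (2 * m) := by rw [← pow_mul]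
      _ = (-1 : ZMod p) ^ m * (2 : ZMod p) ^ (p - 1) := by rw [show 2 * m = p - 1 from by omega]
      _ = (-1 : ZMod p) ^ m := by rw [hf, mul_one]
  linear_combination (-4 : ZMod p) * h4
end

section
/- For every integer n ≥ 0, the sequence W satisfies the recurrence (n+3)·W_{n+3} = −3(n+1)·W_n + (n−5)·W_{n+1} + (3n+7)·W_{n+2}. -/
open Finset

/-- Integer-cast absorption identity, valid for all n, k. -/
lemma abs' (n k : ℕ) : (n.choose (k+1) : ℤ) * ((k : ℤ) + 1) = (n.choose k : ℤ) * ((n : ℤ) - k) := by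
  rcases le_or_gt k n with h | h
  · have h1 := Nat.choose_succ_right_eq n k
    have h2 : ((n - k : ℕ) : ℤ) = (n : ℤ) - k := by
      omega
    calc (n.choose (k+1) : ℤ) * ((k : ℤ) + 1)
        = ((n.choose (k+1) * (k+1) : ℕ) : ℤ) := by push_cast; ring
      _ = ((n.choose k * (n - k) : ℕ) : ℤ) := by rw [h1]
      _ = (n.choose k : ℤ) * ((n : ℤ) - k) := by push_cast [h2]; ring
  · rw [Nat.choose_eq_zero_of_lt (by omega), Nat.choose_eq_zero_of_lt h]
    simp

/-- Integer-cast Pascal identity. -/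
lemma pas (m r : ℕ) : ((m+1).choose (r+1) : ℤ) = (m.choose r : ℤ) + (m.choose (r+1) : ℤ) := by
  exact_mod_cast Nat.choose_succ_succ m r

/-- First-order recurrence for c. -/
lemma c_rec (k : ℕ) : ((k : ℤ) + 1) * c (k+1) = (4 * (k : ℤ) - 2) * c k := by
  cases k with
  | zero => simp [c]
  | succ j =>
    have h0 : (j + 1) * catalan j = Nat.centralBinom j := succ_mul_catalan_eq_centralBinom j
    have h1 : (j + 1 + 1) * catalan (j + 1) = Nat.centralBinom (j + 1) :=
      succ_mul_catalan_eq_centralBinom (j + 1)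
    have h2 : (j + 1) * Nat.centralBinom (j + 1) = 2 * (2 * j + 1) * Nat.centralBinom j :=
      Nat.succ_mul_centralBinom_succ j
    have e : (j + 1) * ((j + 2) * catalan (j + 1)) = (j + 1) * ((4 * j + 2) * catalan j) := by
      calc (j + 1) * ((j + 2) * catalan (j + 1)) = (j + 1) * Nat.centralBinom (j + 1) := by
            rw [show j + 2 = j + 1 + 1 from rfl, h1]
        _ = 2 * (2 * j + 1) * Nat.centralBinom j := h2
        _ = 2 * (2 * j + 1) * ((j + 1) * catalan j) := by rw [h0]
        _ = (j + 1) * ((4 * j + 2) * catalan j) := by ring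
    have e2 : (j + 2) * catalan (j + 1) = (4 * j + 2) * catalan j :=
      Nat.eq_of_mul_eq_mul_left (Nat.succ_pos j) e
    have e3 : ((j : ℤ) + 2) * (catalan (j + 1) : ℤ) = (4 * (j : ℤ) + 2) * (catalan j : ℤ) := by
      exact_mod_cast e2
    simp only [c, Nat.succ_ne_zero, if_false, Nat.add_sub_cancel]
    push_cast
    linear_combination 2 * e3

/-- The pure binomial identity underlying the certificate. -/
lemma bin (n k : ℕ) :
    ((n : ℤ) + 3) * ((n+3).choose (2*k) : ℤ) + 3 * ((n : ℤ) + 1) * (n.choose (2*k) : ℤ)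
      - ((n : ℤ) - 5) * ((n+1).choose (2*k) : ℤ) - (3 * (n : ℤ) + 7) * ((n+2).choose (2*k) : ℤ)
    = -4 * (2 * (k : ℤ) - 1) * ((n+1).choose (2*k) : ℤ)
      + 2 * (k : ℤ) * ((n+1).choose (2*(k-1)) : ℤ) := by
  match k with
  | 0 => norm_num; ring
  | 1 =>
    have h1 := abs' n 1
    have pF : ((n+1).choose 2 : ℤ) = (n.choose 1 : ℤ) + (n.choose 2 : ℤ) := pas n 1
    have pC : ((n+2).choose 2 : ℤ) = ((n+1).choose 1 : ℤ) + ((n+1).choose 2 : ℤ) := pas (n+1) 1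
    have pA : ((n+3).choose 2 : ℤ) = ((n+2).choose 1 : ℤ) + ((n+2).choose 2 : ℤ) := pas (n+2) 1
    have c1 : (n.choose 1 : ℤ) = (n : ℤ) := by rw [Nat.choose_one_right]
    have c2 : ((n+1).choose 1 : ℤ) = (n : ℤ) + 1 := by rw [Nat.choose_one_right]; push_cast; ring
    have c3 : ((n+2).choose 1 : ℤ) = (n : ℤ) + 2 := by rw [Nat.choose_one_right]; push_cast; ring
    norm_num [pA, pC, pF, c1, c2, c3]
    rw [Nat.choose_one_right] at h1
    linear_combination 4 * h1
  | (j+2) =>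
    have hcol1 : 2 * (j + 2) = 2 * j + 4 := by ring
    have hcol2 : 2 * ((j + 2) - 1) = 2 * j + 2 := by omega
    rw [hcol1, hcol2]
    have pA : ((n+3).choose (2*j+4) : ℤ)
        = ((n+2).choose (2*j+3) : ℤ) + ((n+2).choose (2*j+4) : ℤ) := pas (n+2) (2*j+3)
    have pB : ((n+2).choose (2*j+4) : ℤ)
        = ((n+1).choose (2*j+3) : ℤ) + ((n+1).choose (2*j+4) : ℤ) := pas (n+1) (2*j+3)
    have pC : ((n+2).choose (2*j+3) : ℤ)
        = ((n+1).choose (2*j+2) : ℤ) + ((n+1).choose (2*j+3) : ℤ) := pas (n+1) (2*j+2)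
    have pD : ((n+1).choose (2*j+4) : ℤ)
        = (n.choose (2*j+3) : ℤ) + (n.choose (2*j+4) : ℤ) := pas n (2*j+3)
    have pE : ((n+1).choose (2*j+3) : ℤ)
        = (n.choose (2*j+2) : ℤ) + (n.choose (2*j+3) : ℤ) := pas n (2*j+2)
    have pF : ((n+1).choose (2*j+2) : ℤ)
        = (n.choose (2*j+1) : ℤ) + (n.choose (2*j+2) : ℤ) := pas n (2*j+1)
    have h1 : (n.choose (2*j+4) : ℤ) * ((2*j+3 : ℕ) + 1 : ℤ)
        = (n.choose (2*j+3) : ℤ) * ((n : ℤ) - (2*j+3 : ℕ)) := abs' n (2*j+3)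
    have h3 : (n.choose (2*j+2) : ℤ) * ((2*j+1 : ℕ) + 1 : ℤ)
        = (n.choose (2*j+1) : ℤ) * ((n : ℤ) - (2*j+1 : ℕ)) := abs' n (2*j+1)
    push_cast at h1 h3
    rw [pA, pB, pC, pD, pE, pF]
    push_cast
    linear_combination 4 * h1 - h3

/-- The telescoping certificate. -/
def G (n k : ℕ) : ℤ := -2 * (k : ℤ) * c k * ((n+1).choose (2*(k-1)) : ℤ)

lemma key (n k : ℕ) :
    ((n : ℤ) + 3) * (((n+3).choose (2*k) : ℤ) * c k)
      + 3 * ((n : ℤ) + 1) * ((n.choose (2*k) : ℤ) * c k)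
      - ((n : ℤ) - 5) * (((n+1).choose (2*k) : ℤ) * c k)
      - (3 * (n : ℤ) + 7) * (((n+2).choose (2*k) : ℤ) * c k)
    = G n (k+1) - G n k := by
  have hb := bin n k
  have hc := c_rec k
  simp only [G, Nat.add_sub_cancel]
  push_cast
  linear_combination (c k) * hb + 2 * (((n+1).choose (2*k) : ℤ)) * hc

lemma W_eq (m M : ℕ) (h : m / 2 + 1 ≤ M) :
    W m = ∑ k ∈ Finset.range M, (m.choose (2*k) : ℤ) * c k := by
  rw [W]
  apply Finset.sum_subset (Finset.range_subset_range.mpr h)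
  intro x hx hx'
  simp only [Finset.mem_range] at hx hx'
  rw [Nat.choose_eq_zero_of_lt (by omega)]
  simp

theorem stmt_9 (n : ℕ) :
    ((n : ℤ) + 3) * W (n + 3) =
      -3 * ((n : ℤ) + 1) * W n + ((n : ℤ) - 5) * W (n + 1) + (3 * (n : ℤ) + 7) * W (n + 2) := by
  set M := n / 2 + 3 with hM
  rw [W_eq n M (by omega), W_eq (n+1) M (by omega), W_eq (n+2) M (by omega),
    W_eq (n+3) M (by omega)]
  have h0 : G n 0 = 0 := by simp [G]
  have hMz : G n M = 0 := by
    have hz : (n+1).choose (2*(n/2+2)) = 0 := Nat.choose_eq_zero_of_lt (by omega)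
    simp [G, hM, hz]
  rw [← sub_eq_zero]
  have expand : ((n : ℤ) + 3) * ∑ k ∈ Finset.range M, ((n+3).choose (2*k) : ℤ) * c k -
      (-3 * ((n : ℤ) + 1) * ∑ k ∈ Finset.range M, (n.choose (2*k) : ℤ) * c k
        + ((n : ℤ) - 5) * ∑ k ∈ Finset.range M, ((n+1).choose (2*k) : ℤ) * c k
        + (3 * (n : ℤ) + 7) * ∑ k ∈ Finset.range M, ((n+2).choose (2*k) : ℤ) * c k)
      = ∑ k ∈ Finset.range M, (G n (k+1) - G n k) := by
    simp only [Finset.mul_sum, ← Finset.sum_add_distrib, ← Finset.sum_sub_distrib]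
    apply Finset.sum_congr rfl
    intro k _
    linear_combination key n k
  rw [expand, Finset.sum_range_sub, h0, hMz, sub_zero]
end
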